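/- arXiv:1710.00294 — 3 statements merged into one kernel-verified Lean document; each statement's English description precedes it below -/
import Mathlib

section
/- Let A and B be finite abelian groups (written additively) with the same cardinality, and let φ : A →+ B and ψ : B →+ A be group homomorphisms such that ψ(φ(a)) = 2 • a for all a ∈ A and φ(ψ(b)) = 2 • b for all b ∈ B. Assume the kernel of φ has exactly 2 elements and the kernel of ψ has exactly 2 elements. Then 4 does not divide the cardinality of A if and only if both {a ∈ A : 2 • a = 0} and {b ∈ B : 2 • b = 0} have exactly 2 elements. -/
/-!
Since `ψ ∘ φ = 2`, the kernel of `φ` lies in `A[2]`, which has order a power of `2` (it is an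
`𝔽₂`-vector space) dividing `|A|`; so if `4 ∤ |A| = |B|`, both `A[2]` and `B[2]` have order `2`.
Conversely, if `A[2]` and `B[2]` have order `2`, they are the kernels of `φ` and `ψ`, and then
`4 • a = 0` forces `2 • φ a = φ (2 • a) = 0`, so `2 • a = ψ (φ a) = 0`: `A[4] = A[2]`.
But if `4 ∣ |A|`, the image `2A`, of order `|A| / 2`, has by Cauchy an element `2 • a` of order `2`,
and then `a ∈ A[4] \ A[2]`.
-/

open scoped AddSubgroup
open AddSubgroup (torsionBy)

namespace AddSubgroup

variable {G : Type*} [AddCommGroup G]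

lemma mem_torsionBy_two {x : G} : x ∈ G[2] ↔ 2 • x = 0 :=
  torsionBy.nsmul_iff (n := 2)

lemma _root_.Set.ncard_two_nsmul_eq_zero : {x : G | 2 • x = 0}.ncard = Nat.card G[2] := by
  rw [← Nat.card_coe_set_eq]
  congr
  ext x
  exact mem_torsionBy_two.symm

lemma exists_card_torsionBy_two_eq_two_pow [Finite G] : ∃ k, Nat.card G[2] = 2 ^ k := by
  let := torsionBy.zmodModule (A := G) (n := 2)
  exact ⟨_, by simpa using Module.natCard_eq_pow_finrank (K := ZMod 2) (V := G[2])⟩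

lemma card_torsionBy_two_eq_two_of_not_four_dvd [Finite G] (h4 : ¬ 4 ∣ Nat.card G)
    {K : AddSubgroup G} (hK : K ≤ G[2]) (hK2 : Nat.card K = 2) : Nat.card G[2] = 2 := by
  obtain ⟨k, hk⟩ := exists_card_torsionBy_two_eq_two_pow (G := G)
  have hk1 : k ≤ 1 := by
    by_contra! hk1
    exact h4 <| (pow_dvd_pow 2 hk1).trans (hk ▸ card_addSubgroup_dvd_card G[2])
  have hk0 : k ≠ 0 := by
    rintro rfl
    have := card_dvd_of_le hK
    rw [hK2, hk] at this
    norm_num at this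
  rw [hk, show k = 1 by omega, pow_one]

lemma card_range_two_nsmul_mul_two [Finite G] (h2 : Nat.card G[2] = 2) :
    Nat.card (nsmulAddMonoidHom 2 : G →+ G).range * 2 = Nat.card G := by
  have hker : (nsmulAddMonoidHom 2 : G →+ G).ker = G[2] := by
    ext x
    exact mem_torsionBy_two.symm
  rw [← index_ker, hker, ← h2, mul_comm, card_mul_index]

lemma not_four_dvd_card_of_torsionBy_four_le [Finite G] (h2 : Nat.card G[2] = 2)
    (h4 : G[4] ≤ G[2]) : ¬ 4 ∣ Nat.card G := by
  intro hdvd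
  have hrange : 2 ∣ Nat.card (nsmulAddMonoidHom 2 : G →+ G).range := by
    rw [← card_range_two_nsmul_mul_two h2] at hdvd
    omega
  obtain ⟨y, hy⟩ := exists_prime_addOrderOf_dvd_card' 2 hrange
  obtain ⟨x, hx⟩ := y.2
  have h4x : 4 • x = 0 := by
    have := congrArg Subtype.val (hy ▸ addOrderOf_nsmul_eq_zero y)
    simpa [← hx, smul_smul] using this
  have h2x : 2 • x = 0 := mem_torsionBy_two.mp (h4 (torsionBy.nsmul_iff (n := 4) |>.mpr h4x))
  have : y = 0 := Subtype.ext (hx ▸ h2x)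
  simp [this] at hy

end AddSubgroup

namespace AddMonoidHom

open AddSubgroup

variable {A B : Type*} [AddCommGroup A] [AddCommGroup B] {φ : A →+ B} {ψ : B →+ A}

lemma ker_le_torsionBy_two (hψφ : ∀ a, ψ (φ a) = 2 • a) : φ.ker ≤ A[2] := by
  intro a ha
  rw [mem_torsionBy_two, ← hψφ, ha, map_zero]

lemma torsionBy_four_le_two_of_ker_eq (hψφ : ∀ a, ψ (φ a) = 2 • a) (hφ : φ.ker = A[2])
    (hψ : ψ.ker = B[2]) : A[4] ≤ A[2] := by
  intro a ha
  have h2a : 2 • a ∈ φ.ker := by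
    rw [hφ, mem_torsionBy_two, smul_smul]
    exact torsionBy.nsmul_iff (n := 4) |>.mp ha
  have hφa : φ a ∈ ψ.ker := by
    rw [hψ, mem_torsionBy_two, ← map_nsmul]
    exact h2a
  rw [mem_torsionBy_two, ← hψφ]
  exact hφa

end AddMonoidHom

theorem not_four_dvd_card_iff_two_torsion_card_two
    {A B : Type*} [AddCommGroup A] [AddCommGroup B] [Fintype A] [Fintype B]
    (hcard : Fintype.card A = Fintype.card B)
    (φ : A →+ B) (ψ : B →+ A)
    (hψφ : ∀ a : A, ψ (φ a) = 2 • a)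
    (hφψ : ∀ b : B, φ (ψ b) = 2 • b)
    (hkφ : Nat.card φ.ker = 2)
    (hkψ : Nat.card ψ.ker = 2) :
    ¬ (4 ∣ Fintype.card A) ↔
      ({a : A | 2 • a = 0}.ncard = 2 ∧ {b : B | 2 • b = 0}.ncard = 2) := by
  have hφ := AddMonoidHom.ker_le_torsionBy_two hψφ
  have hψ := AddMonoidHom.ker_le_torsionBy_two hφψ
  rw [Fintype.card_eq_nat_card, Fintype.card_eq_nat_card] at hcard
  rw [Set.ncard_two_nsmul_eq_zero, Set.ncard_two_nsmul_eq_zero, Fintype.card_eq_nat_card]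
  constructor
  · intro h4
    exact ⟨AddSubgroup.card_torsionBy_two_eq_two_of_not_four_dvd h4 hφ hkφ,
      AddSubgroup.card_torsionBy_two_eq_two_of_not_four_dvd (hcard ▸ h4) hψ hkψ⟩
  · rintro ⟨hA, hB⟩
    have hφ_eq := AddSubgroup.eq_of_le_of_card_ge hφ (hA.trans hkφ.symm).le
    have hψ_eq := AddSubgroup.eq_of_le_of_card_ge hψ (hB.trans hkψ.symm).le
    exact AddSubgroup.not_four_dvd_card_of_torsionBy_four_le hA
      (AddMonoidHom.torsionBy_four_le_two_of_ker_eq hψφ hφ_eq hψ_eq)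
end

section
/- Let A and B be abelian groups (written additively) with B finite, and let φ : A →+ B and ψ : B →+ A be group homomorphisms such that ψ(φ(a)) = 2 • a for all a ∈ A and φ(ψ(b)) = 2 • b for all b ∈ B. Assume the kernel of φ has exactly 2 elements, the kernel of ψ has exactly 2 elements, and the set {a ∈ A : 2 • a = 0} has exactly 2 elements. If A contains an element of additive order 4, then the set {b ∈ B : 2 • b = 0} has at least 4 elements. -/
/-!
Since `ψ ∘ φ = 2`, `ker φ` lies in the 2-torsion of `A`, and both have two elements, so they
coincide. For `a` of order 4, `φ a` is then nonzero while `2 • φ a = φ (2 • a) = 0`. A nonzero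
`t ∈ ker ψ` is 2-torsion because `φ ∘ ψ = 2`, and `t ≠ φ a` because `ψ (φ a) = 2 • a ≠ 0`.
Hence `0, φ a, t, φ a + t` are four distinct 2-torsion points of `B`.
-/

section TwoTorsion

variable {A B : Type*} [AddCommGroup A] [AddCommGroup B]

theorem AddMonoidHom.ker_subset_two_torsion {φ : A →+ B} {ψ : B →+ A}
    (hψφ : ∀ a : A, ψ (φ a) = 2 • a) : (φ.ker : Set A) ⊆ {a : A | 2 • a = 0} := fun a ha => by
  rw [Set.mem_ofPred_eq, ← hψφ a, AddMonoidHom.mem_ker.mp ha, map_zero]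

theorem AddMonoidHom.ker_eq_two_torsion {φ : A →+ B} {ψ : B →+ A}
    (hψφ : ∀ a : A, ψ (φ a) = 2 • a) (hkφ : Nat.card φ.ker = 2)
    (h2 : {a : A | 2 • a = 0}.ncard = 2) : (φ.ker : Set A) = {a : A | 2 • a = 0} :=
  Set.eq_of_subset_of_ncard_le (ker_subset_two_torsion hψφ)
    (by rw [h2, ← hkφ, ← Nat.card_coe_set_eq]; rfl)
    (Set.finite_of_ncard_ne_zero (by rw [h2]; norm_num))

theorem two_nsmul_ne_zero_of_addOrderOf_eq_four {a : A} (ha : addOrderOf a = 4) :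
    2 • a ≠ 0 := fun h => by
  have := addOrderOf_dvd_of_nsmul_eq_zero h
  rw [ha] at this
  omega

theorem two_nsmul_two_nsmul_of_addOrderOf_eq_four {a : A} (ha : addOrderOf a = 4) :
    2 • 2 • a = 0 := by
  rw [smul_smul, show 2 * 2 = addOrderOf a from ha.symm, addOrderOf_nsmul_eq_zero]

theorem four_le_ncard_two_torsion [Finite A] {x y : A} (hx : x ≠ 0) (hy : y ≠ 0) (hxy : x ≠ y)
    (h2x : 2 • x = 0) (h2y : 2 • y = 0) : 4 ≤ {a : A | 2 • a = 0}.ncard := by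
  classical
  have hsum : x + y ≠ 0 := fun h => hxy <| by
    rw [eq_neg_of_add_eq_zero_left h, neg_eq_of_add_eq_zero_left (by rwa [← two_nsmul])]
  have hsub : ({0, x, y, x + y} : Set A) ⊆ {a : A | 2 • a = 0} := by
    rintro a (rfl | rfl | rfl | rfl)
    · exact nsmul_zero 2
    · exact h2x
    · exact h2y
    · simp only [Set.mem_ofPred_eq, nsmul_add, h2x, h2y, add_zero]
  calc 4 = ({0, x, y, x + y} : Set A).ncard := by
        rw [Set.ncard_eq_toFinset_card']
        simp [hx, hy, hxy, hx.symm, hy.symm, hsum.symm]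
    _ ≤ _ := Set.ncard_le_ncard hsub

end TwoTorsion

theorem two_torsion_of_image_ge_four
    {A B : Type*} [AddCommGroup A] [AddCommGroup B] [Finite B]
    (φ : A →+ B) (ψ : B →+ A)
    (hψφ : ∀ a : A, ψ (φ a) = 2 • a)
    (hφψ : ∀ b : B, φ (ψ b) = 2 • b)
    (hkφ : Nat.card φ.ker = 2)
    (hkψ : Nat.card ψ.ker = 2)
    (h2 : {a : A | 2 • a = 0}.ncard = 2)
    (h4 : ∃ a : A, addOrderOf a = 4) :
    4 ≤ {b : B | 2 • b = 0}.ncard := by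
  obtain ⟨a, ha⟩ := h4
  have hker : ∀ x, φ x = 0 ↔ 2 • x = 0 :=
    Set.ext_iff.mp (AddMonoidHom.ker_eq_two_torsion hψφ hkφ h2)
  have ha2 := two_nsmul_ne_zero_of_addOrderOf_eq_four ha
  have hφa : φ a ≠ 0 := fun h => ha2 ((hker a).mp h)
  have h2φa : 2 • φ a = 0 := by
    rw [← map_nsmul, hker]
    exact two_nsmul_two_nsmul_of_addOrderOf_eq_four ha
  have hψ_ne_bot : ψ.ker ≠ ⊥ := fun h => by
    rw [h, AddSubgroup.card_bot] at hkψ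
    omega
  obtain ⟨t, htψ, ht⟩ := ψ.ker.bot_or_exists_ne_zero.resolve_left hψ_ne_bot
  have hne : φ a ≠ t := fun h => ha2 (by rw [← hψφ a, h, htψ])
  exact four_le_ncard_two_torsion hφa ht hne h2φa
    (AddMonoidHom.ker_subset_two_torsion hφψ htψ)
end

section
/- Let F be a finite field of odd characteristic, let e, b, c ∈ F, and let W be the Weierstrass curve over F with a₁ = 0, a₃ = 0, a₂ = b - e, a₄ = c - e·b, a₆ = -e·c (so that the affine equation of W is y² = (x - e)(x² + bx + c)). Assume the discriminant W.Δ is nonzero. Then the set {P ∈ W.Point : 2 • P = 0} has exactly 2 elements if and only if b² - 4c is not a square in F. -/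
/-!
A point `P ≠ 0` satisfies `2 • P = 0` iff `P = -P`, i.e. iff `y = 0` on `y² = (x - e)(x² + bx + c)`.
So the `2`-torsion consists of `0` and the points `(x, 0)` with `x` a root of the cubic; `Δ ≠ 0` makes
them all nonsingular and keeps `e` from being a root of the quadratic. Hence there are exactly two
such points iff `x² + bx + c` has no root, iff `b² - 4c` is not a square.
-/

open Set

lemma exists_quadratic_eq_zero_iff_isSquare_discrim {K : Type*} [Field K] [NeZero (2 : K)]
    {a b c : K} (ha : a ≠ 0) :
    (∃ x, a * (x * x) + b * x + c = 0) ↔ IsSquare (discrim a b c) :=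
  ⟨fun ⟨x, hx⟩ => ⟨2 * a * x + b, by rw [discrim_eq_sq_of_quadratic_eq_zero hx, sq]⟩,
    fun ⟨s, hs⟩ => exists_quadratic_eq_zero ha ⟨s, hs⟩⟩

namespace WeierstrassCurve.Affine

variable {F : Type*} [Field F] {W : Affine F}

lemma self_eq_negY_iff [NeZero (2 : F)] (ha₁ : W.a₁ = 0) (ha₃ : W.a₃ = 0) {x y : F} :
    y = W.negY x y ↔ y = 0 := by
  rw [negY, ha₁, ha₃, zero_mul, sub_zero, sub_zero, eq_neg_iff_add_eq_zero, ← two_mul,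
    mul_eq_zero, or_iff_right two_ne_zero]

section DecidableEq

variable [DecidableEq F]

lemma Point.two_nsmul_some_eq_zero_iff {x y : F} (h : W.Nonsingular x y) :
    2 • some x y h = 0 ↔ y = W.negY x y := by
  rw [two_nsmul, add_eq_zero_iff_eq_neg, neg_some, some.injEq, and_iff_right rfl]

lemma encard_setOf_two_nsmul_eq_zero [NeZero (2 : F)] (ha₁ : W.a₁ = 0) (ha₃ : W.a₃ = 0)
    (hΔ : W.Δ ≠ 0) :
    {P : W.Point | 2 • P = 0}.encard = {x | W.Equation x 0}.encard + 1 := by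
  let g : {x | W.Equation x 0} → W.Point := fun x =>
    .some x.1 0 ((equation_iff_nonsingular_of_Δ_ne_zero hΔ).mp x.2)
  have hg : g.Injective := fun x x' h => Subtype.ext (Point.some.inj h).1
  have htorsion : {P : W.Point | 2 • P = 0} = insert 0 (range g) := by
    ext (_ | ⟨x, y, h⟩)
    · exact iff_of_true (smul_zero (A := W.Point) 2) (mem_insert _ _)
    · simp only [mem_ofPred_eq, Point.two_nsmul_some_eq_zero_iff, self_eq_negY_iff ha₁ ha₃, g]
      rw [mem_insert_iff, or_iff_right (Point.some_ne_zero h)]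
      refine ⟨fun hy => by subst hy; exact ⟨⟨x, h.1⟩, rfl⟩,
        fun ⟨x', hx'⟩ => (Point.some.inj hx').2.symm⟩
  rw [htorsion, encard_insert_of_notMem, ← image_univ, hg.encard_image, encard_univ]
  · rfl
  rintro ⟨x, hx⟩
  exact Point.some_ne_zero _ hx

end DecidableEq

variable {e b c : F}

lemma Δ_eq_of_factored
    (hW : W = { a₁ := 0, a₂ := b - e, a₃ := 0, a₄ := c - e * b, a₆ := -(e * c) }) :
    W.Δ = 16 * (b ^ 2 - 4 * c) * (e ^ 2 + b * e + c) ^ 2 := by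
  subst hW
  simp only [Δ, b₂, b₄, b₆, b₈]
  ring

lemma equation_zero_iff_of_factored
    (hW : W = { a₁ := 0, a₂ := b - e, a₃ := 0, a₄ := c - e * b, a₆ := -(e * c) }) {x : F} :
    W.Equation x 0 ↔ (x - e) * (x * x + b * x + c) = 0 := by
  rw [equation_iff, hW]
  constructor <;> intro h <;> linear_combination -h

end WeierstrassCurve.Affine

open WeierstrassCurve.Affine

open Classical in
theorem two_torsion_card_two_iff_not_isSquare_discrim_general
    {F : Type*} [Field F] (hchar : ringChar F ≠ 2)
    (e b c : F)
    (W : WeierstrassCurve.Affine F)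
    (hW : W = { a₁ := 0, a₂ := b - e, a₃ := 0, a₄ := c - e * b, a₆ := -(e * c) })
    (hΔ : W.Δ ≠ 0) :
    {P : W.Point | 2 • P = 0}.ncard = 2 ↔ ¬ IsSquare (b ^ 2 - 4 * c) := by
  have : NeZero (2 : F) := ⟨Ring.two_ne_zero hchar⟩
  have he : e ∉ {x | x * x + b * x + c = 0} := fun (h : e * e + b * e + c = 0) =>
    hΔ (by rw [Δ_eq_of_factored hW, sq e, h]; ring)
  have hroots : {x | W.Equation x 0} = insert e {x | x * x + b * x + c = 0} := by
    ext x
    simp [equation_zero_iff_of_factored hW, sub_eq_zero]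
  have hcard : {P : W.Point | 2 • P = 0}.encard = {x | x * x + b * x + c = 0}.encard + 2 := by
    rw [encard_setOf_two_nsmul_eq_zero (by rw [hW]) (by rw [hW]) hΔ, hroots,
      encard_insert_of_notMem he, add_assoc, one_add_one_eq_two]
  have hsq : (∃ x, x * x + b * x + c = 0) ↔ IsSquare (b ^ 2 - 4 * c) := by
    simpa [discrim] using
      exists_quadratic_eq_zero_iff_isSquare_discrim (one_ne_zero' F) (b := b) (c := c)
  rw [ncard_def, hcard, ← hsq]
  simp [eq_empty_iff_forall_notMem]

open Classical in
theorem two_torsion_card_two_iff_not_isSquare_discrim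
    {F : Type*} [Field F] [Fintype F] (hchar : ringChar F ≠ 2)
    (e b c : F)
    (W : WeierstrassCurve.Affine F)
    (hW : W = { a₁ := 0, a₂ := b - e, a₃ := 0, a₄ := c - e * b, a₆ := -(e * c) })
    (hΔ : W.Δ ≠ 0) :
    {P : W.Point | 2 • P = 0}.ncard = 2 ↔ ¬ IsSquare (b ^ 2 - 4 * c) :=
  two_torsion_card_two_iff_not_isSquare_discrim_general hchar e b c W hW hΔ
end
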